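/- For every μ with 1/2 < μ ≤ 1, there exists a unique function h : [0,1] → [0,1] satisfying h(x) = (1/2)·h(2μx) for 0 ≤ x ≤ 1/2 and h(x) = 1 − (1/2)·h(2μ(1−x)) for 1/2 < x ≤ 1; moreover, this function satisfies the commutation relation T(h(x)) = h(T_μ(x)) for all x ∈ [0,1]. -/

import Mathlib

/-!
Both clauses of the functional equation read `h x = step h x`, where `step h x` is `h (T_μ x) / 2`
or `1 - h (T_μ x) / 2` according to the side of `1/2` on which `x` lies. Since `T_μ` maps `[0,1]`
into itself for `μ ≤ 1`, the operator `step` halves the distance between two functions wherever it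
is evaluated, so two solutions agree on `[0,1]`, and the iterates of `step` from `0` converge
pointwise to a solution. The commutation relation holds because the full tent map undoes both
branches of `step`: `T (v / 2) = v` and `T (1 - v / 2) = v` for `v ≤ 1`.
-/

open Set

/-- The symmetric tent map of height `μ`:
`T_μ(x) = 2μx` for `x ≤ 1/2` and `T_μ(x) = 2μ(1−x)` for `x > 1/2`. -/
noncomputable def tentMap (μ : ℝ) (x : ℝ) : ℝ :=
  if x ≤ 1/2 then 2*μ*x else 2*μ*(1-x)

/-- `h : [0,1] → [0,1]` satisfies the commuter functional equation for `T_μ`: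
`h(x) = ½ h(2μx)` for `0 ≤ x ≤ 1/2` and `h(x) = 1 − ½ h(2μ(1−x))` for `1/2 < x ≤ 1`. -/
def IsCommuter (μ : ℝ) (h : ℝ → ℝ) : Prop :=
  (∀ x ∈ Icc (0:ℝ) 1, h x ∈ Icc (0:ℝ) 1) ∧
  (∀ x : ℝ, 0 ≤ x → x ≤ 1/2 → h x = (1/2) * h (2*μ*x)) ∧
  (∀ x : ℝ, 1/2 < x → x ≤ 1 → h x = 1 - (1/2) * h (2*μ*(1-x)))

open Filter Topology

lemma eqOn_zero_of_abs_le_half_abs_comp {α : Type*} {s : Set α} {f : α → α} (hf : MapsTo f s s)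
    {d : α → ℝ} {C : ℝ} (hC : ∀ x ∈ s, |d x| ≤ C) (hd : ∀ x ∈ s, |d x| ≤ |d (f x)| / 2) :
    EqOn d 0 s := by
  have hbound : ∀ n : ℕ, ∀ x ∈ s, |d x| ≤ C * (1 / 2) ^ n := by
    intro n
    induction n with
    | zero => simpa using hC
    | succ n ih =>
      intro x hx
      calc |d x| ≤ |d (f x)| / 2 := hd x hx
        _ ≤ C * (1 / 2) ^ n / 2 := by gcongr; exact ih _ (hf hx)
        _ = C * (1 / 2) ^ (n + 1) := by ring
  intro x hx
  have hlim : Tendsto (fun n : ℕ => C * (1 / 2 : ℝ) ^ n) atTop (𝓝 0) := by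
    simpa using (tendsto_pow_atTop_nhds_zero_of_lt_one (by norm_num : (0 : ℝ) ≤ 1 / 2)
      (by norm_num)).const_mul C
  exact abs_nonpos_iff.mp (ge_of_tendsto' hlim fun n => hbound n x hx)

lemma tentMap_mapsTo_Icc {μ : ℝ} (hμ0 : 0 ≤ μ) (hμ1 : μ ≤ 1) :
    MapsTo (tentMap μ) (Icc 0 1) (Icc 0 1) := by
  rintro x ⟨hx0, hx1⟩
  unfold tentMap
  split_ifs <;> constructor <;> nlinarith

lemma tentMap_one_half {v : ℝ} (hv : v ≤ 1) : tentMap 1 (v / 2) = v := by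
  rw [tentMap, if_pos (by linarith)]
  ring

lemma tentMap_one_one_sub_half {v : ℝ} (hv : v ≤ 1) : tentMap 1 (1 - v / 2) = v := by
  unfold tentMap
  split_ifs with h
  · linarith
  · ring

noncomputable def commuterStep (μ : ℝ) (g : ℝ → ℝ) (x : ℝ) : ℝ :=
  if x ≤ 1/2 then g (tentMap μ x) / 2 else 1 - g (tentMap μ x) / 2

section commuterStep

variable {μ : ℝ}

lemma abs_commuterStep_sub (g g' : ℝ → ℝ) (x : ℝ) :
    |commuterStep μ g x - commuterStep μ g' x| = |g (tentMap μ x) - g' (tentMap μ x)| / 2 := by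
  unfold commuterStep
  split_ifs
  · rw [← sub_div, abs_div, abs_two]
  · rw [show 1 - g (tentMap μ x) / 2 - (1 - g' (tentMap μ x) / 2)
      = -(g (tentMap μ x) - g' (tentMap μ x)) / 2 by ring, abs_div, abs_neg, abs_two]

lemma commuterStep_mem_Icc {g : ℝ → ℝ} {x : ℝ} (hg : g (tentMap μ x) ∈ Icc 0 1) :
    commuterStep μ g x ∈ Icc 0 1 := by
  obtain ⟨h0, h1⟩ := hg
  unfold commuterStep
  split_ifs <;> constructor <;> linarith

lemma tentMap_one_commuterStep {g : ℝ → ℝ} {x : ℝ} (hg : g (tentMap μ x) ≤ 1) :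
    tentMap 1 (commuterStep μ g x) = g (tentMap μ x) := by
  unfold commuterStep
  split_ifs
  · exact tentMap_one_half hg
  · exact tentMap_one_one_sub_half hg

lemma isCommuter_iff {h : ℝ → ℝ} :
    IsCommuter μ h ↔ MapsTo h (Icc 0 1) (Icc 0 1) ∧ ∀ x ∈ Icc 0 1, h x = commuterStep μ h x := by
  unfold IsCommuter commuterStep tentMap
  refine and_congr Iff.rfl ⟨fun ⟨hl, hr⟩ x ⟨hx0, hx1⟩ => ?_, fun hfix => ⟨?_, ?_⟩⟩
  · split_ifs with hx
    · rw [hl x hx0 hx]; ring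
    · rw [hr x (not_le.mp hx) hx1]; ring
  · intro x hx0 hx
    rw [hfix x ⟨hx0, by linarith⟩, if_pos hx, if_pos hx]; ring
  · intro x hx hx1
    rw [hfix x ⟨by linarith, hx1⟩, if_neg (not_le.mpr hx), if_neg (not_le.mpr hx)]; ring

lemma abs_iterate_commuterStep_succ_sub_le (n : ℕ) (x : ℝ) :
    |(commuterStep μ)^[n + 1] 0 x - (commuterStep μ)^[n] 0 x| ≤ (1 / 2) ^ n := by
  induction n generalizing x with
  | zero =>
    simp only [zero_add, Function.iterate_one, Function.iterate_zero, id_eq, Pi.zero_apply,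
      sub_zero, pow_zero, commuterStep]
    split_ifs <;> norm_num
  | succ n ih =>
    have hT := ih (tentMap μ x)
    rw [Function.iterate_succ_apply'] at hT
    rw [Function.iterate_succ_apply' _ (n + 1), Function.iterate_succ_apply' _ n,
      abs_commuterStep_sub, pow_succ]
    linarith

lemma cauchySeq_iterate_commuterStep (x : ℝ) :
    CauchySeq fun n => (commuterStep μ)^[n] 0 x :=
  cauchySeq_of_le_geometric (1 / 2) 1 (by norm_num) fun n => by
    rw [one_mul, Real.dist_eq, abs_sub_comm]
    exact abs_iterate_commuterStep_succ_sub_le n x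

end commuterStep

noncomputable def commuterLimit (μ : ℝ) (x : ℝ) : ℝ :=
  limUnder atTop fun n => (commuterStep μ)^[n] 0 x

section commuterLimit

variable {μ : ℝ}

lemma tendsto_iterate_commuterStep (x : ℝ) :
    Tendsto (fun n => (commuterStep μ)^[n] 0 x) atTop (𝓝 (commuterLimit μ x)) :=
  (cauchySeq_iterate_commuterStep x).tendsto_limUnder

lemma commuterLimit_eq_commuterStep (x : ℝ) :
    commuterLimit μ x = commuterStep μ (commuterLimit μ) x := by
  have hstep : Tendsto (fun n => commuterStep μ ((commuterStep μ)^[n] 0) x) atTop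
      (𝓝 (commuterStep μ (commuterLimit μ) x)) := by
    have hT := tendsto_iterate_commuterStep (μ := μ) (tentMap μ x)
    unfold commuterStep
    split_ifs
    · exact hT.div_const 2
    · exact (hT.div_const 2).const_sub 1
  refine tendsto_nhds_unique ((tendsto_add_atTop_iff_nat 1).mpr
    (tendsto_iterate_commuterStep x)) ?_
  simpa only [Function.iterate_succ_apply'] using hstep

lemma commuterLimit_mapsTo_Icc (hμ0 : 0 ≤ μ) (hμ1 : μ ≤ 1) :
    MapsTo (commuterLimit μ) (Icc 0 1) (Icc 0 1) := by
  have hiter : ∀ n, MapsTo ((commuterStep μ)^[n] 0) (Icc 0 1) (Icc 0 1) := by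
    intro n
    induction n with
    | zero => intro x _; simp
    | succ n ih =>
      intro x hx
      rw [Function.iterate_succ_apply']
      exact commuterStep_mem_Icc (ih (tentMap_mapsTo_Icc hμ0 hμ1 hx))
  intro x hx
  exact isClosed_Icc.mem_of_tendsto (tendsto_iterate_commuterStep x)
    (Eventually.of_forall fun n => hiter n hx)

lemma isCommuter_commuterLimit (hμ0 : 0 ≤ μ) (hμ1 : μ ≤ 1) : IsCommuter μ (commuterLimit μ) :=
  isCommuter_iff.mpr ⟨commuterLimit_mapsTo_Icc hμ0 hμ1, fun x _ => commuterLimit_eq_commuterStep x⟩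

end commuterLimit

namespace IsCommuter

variable {μ : ℝ} {h : ℝ → ℝ}

lemma eqOn (hμ0 : 0 ≤ μ) (hμ1 : μ ≤ 1) {h' : ℝ → ℝ} (hh : IsCommuter μ h)
    (hh' : IsCommuter μ h') : EqOn h h' (Icc 0 1) := by
  obtain ⟨hmaps, hfix⟩ := isCommuter_iff.mp hh
  obtain ⟨hmaps', hfix'⟩ := isCommuter_iff.mp hh'
  have hzero : EqOn (h - h') 0 (Icc 0 1) := by
    refine eqOn_zero_of_abs_le_half_abs_comp (tentMap_mapsTo_Icc hμ0 hμ1) (C := 1)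
      (fun x hx => abs_sub_le_of_nonneg_of_le (hmaps hx).1 (hmaps hx).2 (hmaps' hx).1
        (hmaps' hx).2) fun x hx => ?_
    rw [Pi.sub_apply, hfix x hx, hfix' x hx, abs_commuterStep_sub]
    rfl
  exact fun x hx => sub_eq_zero.mp (hzero hx)

lemma tentMap_one_comp (hμ0 : 0 ≤ μ) (hμ1 : μ ≤ 1) (hh : IsCommuter μ h) {x : ℝ}
    (hx : x ∈ Icc 0 1) : tentMap 1 (h x) = h (tentMap μ x) := by
  obtain ⟨hmaps, hfix⟩ := isCommuter_iff.mp hh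
  rw [hfix x hx]
  exact tentMap_one_commuterStep (hmaps (tentMap_mapsTo_Icc hμ0 hμ1 hx)).2

end IsCommuter

theorem exists_unique_commuter (μ : ℝ) (hμ1 : 1/2 < μ) (hμ2 : μ ≤ 1) :
    (∃ h : ℝ → ℝ, IsCommuter μ h ∧
      ∀ h' : ℝ → ℝ, IsCommuter μ h' → ∀ x ∈ Icc (0:ℝ) 1, h' x = h x) ∧
    (∀ h : ℝ → ℝ, IsCommuter μ h →
      ∀ x ∈ Icc (0:ℝ) 1, tentMap 1 (h x) = h (tentMap μ x)) := by
  have hμ0 : 0 ≤ μ := by linarith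
  have hexists := isCommuter_commuterLimit hμ0 hμ2
  exact ⟨⟨commuterLimit μ, hexists, fun h' hh' => hh'.eqOn hμ0 hμ2 hexists⟩,
    fun h hh x hx => hh.tentMap_one_comp hμ0 hμ2 hx⟩
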